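/- arXiv:2210.13373 — 2 statements merged into one kernel-verified Lean document; each statement's English description precedes it below -/
import Mathlib

section
/- Let $B$ be a symmetric real $n \times n$ matrix with spectral decomposition $B = U_+ \Lambda_+ U_+^\top + U_- \Lambda_- U_-^\top$, where $\Lambda_+$ is the diagonal matrix of the $d_+ \geq 1$ positive eigenvalues, $\Lambda_-$ that of the $d_- \geq 1$ negative eigenvalues, $d_+ + d_- = n$, and $U_+, U_-$ the corresponding orthonormal eigenvector matrices. Define $A^* = \alpha (U_+ (d_+ \Lambda_+) U_+^\top + U_- (-d_- \Lambda_-) U_-^\top)$ for any $\alpha > 0$. Then $A^*$ is symmetric positive definite and $\operatorname{tr}((A^*)^{-1} B) = 0$. -/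
/-! With `W = [U₊ U₋]`, orthonormality and `d₊ + d₋ = n` make `W` an orthogonal matrix, so
`A* = W diag(a) Wᵀ` with `a = (α d₊ λ₊, -α d₋ λ₋) > 0` is positive definite and
`(A*)⁻¹ B = W diag(λ / a) Wᵀ`. Its trace is `∑ λᵢ / aᵢ = d₊ / (α d₊) - d₋ / (α d₋) = 0`. -/

open Matrix

namespace Matrix

lemma fromCols_mul_diagonal_sumElim_mul_transpose {m ι₁ ι₂ K : Type*} [Fintype ι₁] [Fintype ι₂]
    [DecidableEq ι₁] [DecidableEq ι₂] [CommSemiring K]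
    (U : Matrix m ι₁ K) (V : Matrix m ι₂ K) (a : ι₁ → K) (b : ι₂ → K) :
    fromCols U V * diagonal (Sum.elim a b) * (fromCols U V)ᵀ =
      U * diagonal a * Uᵀ + V * diagonal b * Vᵀ := by
  rw [← fromBlocks_diagonal, fromCols_mul_fromBlocks, transpose_fromCols, fromCols_mul_fromRows]
  simp only [Matrix.mul_zero, add_zero, zero_add]

variable {m ι K : Type*} [Fintype m] [Fintype ι] [DecidableEq ι]

section Field

variable [Field K] {W : Matrix m ι K}

lemma inv_mul_diagonal_mul_transpose [DecidableEq m] (hW : W * Wᵀ = 1) (hW' : Wᵀ * W = 1)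
    {d : ι → K} (hd : ∀ i, d i ≠ 0) : (W * diagonal d * Wᵀ)⁻¹ = W * diagonal d⁻¹ * Wᵀ := by
  refine inv_eq_right_inv ?_
  have hdd : diagonal d * diagonal d⁻¹ = 1 := by
    rw [diagonal_mul_diagonal, ← diagonal_one]
    exact congrArg diagonal (funext fun i => mul_inv_cancel₀ (hd i))
  calc W * diagonal d * Wᵀ * (W * diagonal d⁻¹ * Wᵀ)
      = W * diagonal d * (Wᵀ * W) * diagonal d⁻¹ * Wᵀ := by simp only [Matrix.mul_assoc]
    _ = 1 := by rw [hW', Matrix.mul_one, Matrix.mul_assoc W, hdd, Matrix.mul_one, hW]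

lemma trace_mul_diagonal_mul_transpose_mul (hW' : Wᵀ * W = 1) (d e : ι → K) :
    (W * diagonal d * Wᵀ * (W * diagonal e * Wᵀ)).trace = ∑ i, d i * e i := by
  calc (W * diagonal d * Wᵀ * (W * diagonal e * Wᵀ)).trace
      = (W * (diagonal d * (Wᵀ * W) * diagonal e * Wᵀ)).trace := by simp only [Matrix.mul_assoc]
    _ = (diagonal d * diagonal e).trace := by
        rw [hW', Matrix.mul_one, trace_mul_comm, Matrix.mul_assoc, hW', Matrix.mul_one]
    _ = ∑ i, d i * e i := by rw [diagonal_mul_diagonal, trace_diagonal]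

lemma trace_inv_mul_of_mul_diagonal_mul_transpose [DecidableEq m] (hW : W * Wᵀ = 1)
    (hW' : Wᵀ * W = 1) {d : ι → K} (hd : ∀ i, d i ≠ 0) (e : ι → K) :
    ((W * diagonal d * Wᵀ)⁻¹ * (W * diagonal e * Wᵀ)).trace = ∑ i, e i / d i := by
  rw [inv_mul_diagonal_mul_transpose hW hW' hd, trace_mul_diagonal_mul_transpose_mul hW']
  exact Finset.sum_congr rfl fun i _ => by rw [Pi.inv_apply, div_eq_mul_inv, mul_comm]

end Field

lemma posDef_mul_diagonal_mul_transpose [DecidableEq m] {W : Matrix m ι ℝ} (hW : W * Wᵀ = 1)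
    {d : ι → ℝ} (hd : ∀ i, 0 < d i) : (W * diagonal d * Wᵀ).PosDef := by
  have hinj : Function.Injective W.vecMul := Function.LeftInverse.injective
    (g := fun v => v ᵥ* Wᵀ) fun v => by simp only [vecMul_vecMul, hW, vecMul_one]
  simpa only [conjTranspose_eq_transpose_of_trivial] using
    (posDef_diagonal_iff.mpr hd).mul_mul_conjTranspose_same hinj

end Matrix

theorem indefinite_hessian_metric_zero_trace_general
    (n dp dm : ℕ) (hdp : 1 ≤ dp) (hdm : 1 ≤ dm) (hsum : dp + dm = n)
    (B : Matrix (Fin n) (Fin n) ℝ)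
    (Up : Matrix (Fin n) (Fin dp) ℝ) (Um : Matrix (Fin n) (Fin dm) ℝ)
    (lp : Fin dp → ℝ) (lm : Fin dm → ℝ)
    (hlp : ∀ i, 0 < lp i) (hlm : ∀ i, lm i < 0)
    (hUp : Upᵀ * Up = 1) (hUm : Umᵀ * Um = 1) (hUpm : Upᵀ * Um = 0)
    (hB : B = Up * Matrix.diagonal lp * Upᵀ + Um * Matrix.diagonal lm * Umᵀ)
    (α : ℝ) (hα : 0 < α)
    (Astar : Matrix (Fin n) (Fin n) ℝ)
    (hAstar : Astar = α •
      (Up * ((dp : ℝ) • Matrix.diagonal lp) * Upᵀ +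
       Um * ((-(dm : ℝ)) • Matrix.diagonal lm) * Umᵀ)) :
    Astar.PosDef ∧ (Astar⁻¹ * B).trace = 0 := by
  set W := fromCols Up Um
  have hWtW : Wᵀ * W = 1 := by
    have hUmp : Umᵀ * Up = 0 := by simpa [transpose_mul] using congrArg transpose hUpm
    rw [transpose_fromCols, fromRows_mul_fromCols, hUp, hUm, hUpm, hUmp, fromBlocks_one]
  have hWWt : W * Wᵀ = 1 :=
    (mul_eq_one_comm_of_equiv (finSumFinEquiv.trans (finCongr hsum))).mp hWtW
  have hdp' : (0 : ℝ) < dp := by exact_mod_cast hdp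
  have hdm' : (0 : ℝ) < dm := by exact_mod_cast hdm
  set a := Sum.elim ((α * dp) • lp) ((α * -dm) • lm)
  have ha : ∀ i, 0 < a i
    | .inl i => mul_pos (by positivity) (hlp i)
    | .inr i => mul_pos_of_neg_of_neg (mul_neg_of_pos_of_neg hα (neg_neg_of_pos hdm')) (hlm i)
  have hA : Astar = W * diagonal a * Wᵀ := by
    rw [hAstar, fromCols_mul_diagonal_sumElim_mul_transpose]
    simp only [diagonal_smul, Matrix.mul_smul, Matrix.smul_mul, smul_add, smul_smul]
  have hB' : B = W * diagonal (Sum.elim lp lm) * Wᵀ := by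
    rw [hB, fromCols_mul_diagonal_sumElim_mul_transpose]
  refine ⟨hA ▸ posDef_mul_diagonal_mul_transpose hWWt ha, ?_⟩
  rw [hA, hB', trace_inv_mul_of_mul_diagonal_mul_transpose hWWt hWtW fun i => (ha i).ne',
    Fintype.sum_sum_type]
  simp only [a, Sum.elim_inl, Sum.elim_inr, Pi.smul_apply, smul_eq_mul,
    fun i => div_mul_cancel_right₀ (hlp i).ne', fun i => div_mul_cancel_right₀ (hlm i).ne,
    Finset.sum_const, Finset.card_univ, Fintype.card_fin, nsmul_eq_mul]
  field_simp
  ring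

theorem indefinite_hessian_metric_zero_trace
    (n dp dm : ℕ) (hdp : 1 ≤ dp) (hdm : 1 ≤ dm) (hsum : dp + dm = n)
    (B : Matrix (Fin n) (Fin n) ℝ) (hBsymm : B.IsSymm)
    (Up : Matrix (Fin n) (Fin dp) ℝ) (Um : Matrix (Fin n) (Fin dm) ℝ)
    (lp : Fin dp → ℝ) (lm : Fin dm → ℝ)
    (hlp : ∀ i, 0 < lp i) (hlm : ∀ i, lm i < 0)
    (hUp : Upᵀ * Up = 1) (hUm : Umᵀ * Um = 1) (hUpm : Upᵀ * Um = 0)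
    (hB : B = Up * Matrix.diagonal lp * Upᵀ + Um * Matrix.diagonal lm * Umᵀ)
    (α : ℝ) (hα : 0 < α)
    (Astar : Matrix (Fin n) (Fin n) ℝ)
    (hAstar : Astar = α •
      (Up * ((dp : ℝ) • Matrix.diagonal lp) * Upᵀ +
       Um * ((-(dm : ℝ)) • Matrix.diagonal lm) * Umᵀ)) :
    Astar.PosDef ∧ (Astar⁻¹ * B).trace = 0 :=
  indefinite_hessian_metric_zero_trace_general n dp dm hdp hdm hsum B Up Um lp lm hlp hlm hUp hUm
    hUpm hB α hα Astar hAstar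
end

section
/- Let $B$ be a symmetric real $n \times n$ matrix with $d_+ \geq 1$ positive and $d_- \geq 1$ negative eigenvalues and no zero eigenvalues ($d_+ + d_- = n$), with eigendecomposition $B = U M U^\top$ where $M = \operatorname{diag}(\Lambda_+, \Lambda_-)$. Let $D = \operatorname{diag}(d_+ \Lambda_+, -d_- \Lambda_-)$ and $\alpha = |\det(U D U^\top)|^{-1/n}$. Then $A^* = \alpha U D U^\top$ satisfies $\det(A^*) = 1$, $A^* \succ 0$, $A^* = (A^*)^\top$, and $\operatorname{tr}((A^*)^{-1} B) = 0$; in particular $A^*$ attains the minimum value $0$ of $(\operatorname{tr}(A^{-1}B))^2$ over all symmetric positive definite $A$ with $\det A = 1$. -/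
/-!
Since `Λ₋ < 0`, the matrix `D` has positive diagonal, so `A* = α U D Uᵀ` is positive definite,
and `α` is exactly the scaling that makes `det A* = αⁿ det (U D Uᵀ)` equal to `1`.
Conjugating by the orthogonal `U`,
`tr (A*⁻¹ B) = α⁻¹ tr (D⁻¹ M) = α⁻¹ (d₊ · 1/d₊ - d₋ · 1/d₋) = 0`: the factors `d₊` and `-d₋`
make the two eigenvalue blocks contribute `1` and `-1`.
-/

open Matrix

namespace Matrix

variable {ι : Type*} [Fintype ι] [DecidableEq ι]

section CommRing

variable {R : Type*} [CommRing R] {U : Matrix ι ι R}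

lemma orthogonal_conj_mul_orthogonal_conj (hU : U * Uᵀ = 1) (X Y : Matrix ι ι R) :
    U * X * Uᵀ * (U * Y * Uᵀ) = U * (X * Y) * Uᵀ := by
  simp only [Matrix.mul_assoc]
  rw [← Matrix.mul_assoc Uᵀ, mul_eq_one_comm.1 hU, Matrix.one_mul]

lemma trace_orthogonal_conj (hU : U * Uᵀ = 1) (X : Matrix ι ι R) :
    (U * X * Uᵀ).trace = X.trace := by
  rw [trace_mul_cycle, mul_eq_one_comm.1 hU, Matrix.one_mul]

lemma inv_orthogonal_conj (hU : U * Uᵀ = 1) (X : Matrix ι ι R) :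
    (U * X * Uᵀ)⁻¹ = U * X⁻¹ * Uᵀ := by
  rw [mul_inv_rev, mul_inv_rev, inv_eq_right_inv hU, inv_eq_left_inv hU, Matrix.mul_assoc]

end CommRing

lemma inv_smul_of_ne_zero {K : Type*} [Field K] {k : K} (hk : k ≠ 0) (A : Matrix ι ι K) :
    (k • A)⁻¹ = k⁻¹ • A⁻¹ := by
  by_cases hA : IsUnit A.det
  · let := invertibleOfNonzero hk
    simpa [invOf_eq_inv] using inv_smul A k hA
  · have hkA : ¬IsUnit (k • A).det := by simpa [det_smul, isUnit_iff_ne_zero, hk] using hA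
    rw [nonsing_inv_apply_not_isUnit _ hA, nonsing_inv_apply_not_isUnit _ hkA, smul_zero]

lemma trace_inv_diagonal_mul_diagonal {K : Type*} [Field K] {d : ι → K} (hd : ∀ i, d i ≠ 0)
    (l : ι → K) : ((diagonal d)⁻¹ * diagonal l).trace = ∑ i, l i / d i := by
  have hinv : (diagonal d)⁻¹ = diagonal d⁻¹ :=
    inv_eq_left_inv <| by rw [diagonal_mul_diagonal]; simp [hd]
  rw [hinv, diagonal_mul_diagonal, trace_diagonal]
  simp [div_eq_inv_mul]

lemma posDef_orthogonal_conj {U X : Matrix ι ι ℝ} (hU : U * Uᵀ = 1) (hX : X.PosDef) :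
    (U * X * Uᵀ).PosDef := by
  have hUinj : Function.Injective U.vecMul :=
    vecMul_injective_iff_isUnit.2 <| (isUnit_iff_isUnit_det U).2 (isUnit_det_of_right_inverse hU)
  simpa using hX.mul_mul_conjTranspose_same hUinj

lemma det_abs_det_rpow_smul_self {C : Matrix ι ι ℝ} {n : ℕ} (hn : Fintype.card ι = n)
    (hn0 : n ≠ 0) (hC : 0 < C.det) :
    (|C.det| ^ (-(1 : ℝ) / (n : ℝ)) • C).det = 1 := by
  rw [det_smul, hn, abs_of_pos hC, ← Real.rpow_natCast, ← Real.rpow_mul hC.le,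
    div_mul_cancel₀ _ (Nat.cast_ne_zero.2 hn0), Real.rpow_neg_one, inv_mul_cancel₀ hC.ne']

end Matrix

lemma sum_eigenvalue_div_scaled_eigenvalue_eq_zero {dp dm : ℕ} (hdp : dp ≠ 0) (hdm : dm ≠ 0)
    {lp : Fin dp → ℝ} {lm : Fin dm → ℝ} (hlp : ∀ i, lp i ≠ 0) (hlm : ∀ i, lm i ≠ 0) :
    ∑ i, Sum.elim lp lm i / Sum.elim (fun i => (dp : ℝ) * lp i) (fun i => -(dm : ℝ) * lm i) i
      = 0 := by
  have hp : ∀ i, lp i / (dp * lp i) = (dp : ℝ)⁻¹ := fun i => by field_simp [hlp i]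
  have hm : ∀ i, lm i / (-dm * lm i) = -(dm : ℝ)⁻¹ := fun i => by field_simp [hlm i]
  simp only [Fintype.sum_sum_type, Sum.elim_inl, Sum.elim_inr, hp, hm]
  simp [hdp, hdm]

theorem optimal_metric_indefinite_case_general
    (dp dm n : ℕ) (hdp : 1 ≤ dp) (hdm : 1 ≤ dm) (hsum : dp + dm = n)
    (B U : Matrix (Fin dp ⊕ Fin dm) (Fin dp ⊕ Fin dm) ℝ)
    (lp : Fin dp → ℝ) (lm : Fin dm → ℝ)
    (hlp : ∀ i, 0 < lp i) (hlm : ∀ i, lm i < 0)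
    (hU : U * Uᵀ = 1)
    (hB : B = U * Matrix.diagonal (Sum.elim lp lm) * Uᵀ)
    (Dmat : Matrix (Fin dp ⊕ Fin dm) (Fin dp ⊕ Fin dm) ℝ)
    (hD : Dmat = Matrix.diagonal
      (Sum.elim (fun i => (dp : ℝ) * lp i) (fun i => -(dm : ℝ) * lm i)))
    (α : ℝ) (hα : α = |(U * Dmat * Uᵀ).det| ^ (-(1 : ℝ) / (n : ℝ)))
    (Astar : Matrix (Fin dp ⊕ Fin dm) (Fin dp ⊕ Fin dm) ℝ)
    (hAstar : Astar = α • (U * Dmat * Uᵀ)) :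
    Astar.det = 1 ∧ Astar.PosDef ∧ Astar.IsSymm ∧ (Astar⁻¹ * B).trace = 0 ∧
    ∀ A : Matrix (Fin dp ⊕ Fin dm) (Fin dp ⊕ Fin dm) ℝ,
      A.PosDef → A.IsSymm → A.det = 1 →
      (Astar⁻¹ * B).trace ^ 2 ≤ (A⁻¹ * B).trace ^ 2 := by
  have hD_pos : ∀ i, 0 < Sum.elim (fun i => (dp : ℝ) * lp i) (fun i => -(dm : ℝ) * lm i) i := by
    rintro (i | i)
    · exact mul_pos (by positivity) (hlp i)
    · exact mul_pos_of_neg_of_neg (by simp; omega) (hlm i)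
  have hC : (U * Dmat * Uᵀ).PosDef := posDef_orthogonal_conj hU (hD ▸ PosDef.diagonal hD_pos)
  have hα_pos : 0 < α := hα ▸ Real.rpow_pos_of_pos (abs_pos.2 hC.det_pos.ne') _
  have hA_pos : Astar.PosDef := hAstar ▸ hC.smul hα_pos
  have hC_trace : ((U * Dmat * Uᵀ)⁻¹ * B).trace = 0 := by
    rw [hB, inv_orthogonal_conj hU, orthogonal_conj_mul_orthogonal_conj hU,
      trace_orthogonal_conj hU, hD, trace_inv_diagonal_mul_diagonal fun i => (hD_pos i).ne']
    exact sum_eigenvalue_div_scaled_eigenvalue_eq_zero (by omega) (by omega) (fun i => (hlp i).ne')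
      fun i => (hlm i).ne
  have h_trace : (Astar⁻¹ * B).trace = 0 := by
    rw [hAstar, inv_smul_of_ne_zero hα_pos.ne', smul_mul, trace_smul, hC_trace, smul_zero]
  refine ⟨?_, hA_pos, isHermitian_iff_isSymm.1 hA_pos.isHermitian, h_trace,
    fun A _ _ _ => by simp [h_trace, sq_nonneg]⟩
  rw [hAstar, hα]
  exact det_abs_det_rpow_smul_self (by simp [hsum]) (by omega) hC.det_pos

theorem optimal_metric_indefinite_case
    (dp dm n : ℕ) (hdp : 1 ≤ dp) (hdm : 1 ≤ dm) (hsum : dp + dm = n)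
    (B U : Matrix (Fin dp ⊕ Fin dm) (Fin dp ⊕ Fin dm) ℝ)
    (hBsymm : B.IsSymm)
    (lp : Fin dp → ℝ) (lm : Fin dm → ℝ)
    (hlp : ∀ i, 0 < lp i) (hlm : ∀ i, lm i < 0)
    (hU : U * Uᵀ = 1)
    (hB : B = U * Matrix.diagonal (Sum.elim lp lm) * Uᵀ)
    (Dmat : Matrix (Fin dp ⊕ Fin dm) (Fin dp ⊕ Fin dm) ℝ)
    (hD : Dmat = Matrix.diagonal
      (Sum.elim (fun i => (dp : ℝ) * lp i) (fun i => -(dm : ℝ) * lm i)))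
    (α : ℝ) (hα : α = |(U * Dmat * Uᵀ).det| ^ (-(1 : ℝ) / (n : ℝ)))
    (Astar : Matrix (Fin dp ⊕ Fin dm) (Fin dp ⊕ Fin dm) ℝ)
    (hAstar : Astar = α • (U * Dmat * Uᵀ)) :
    Astar.det = 1 ∧ Astar.PosDef ∧ Astar.IsSymm ∧ (Astar⁻¹ * B).trace = 0 ∧
    ∀ A : Matrix (Fin dp ⊕ Fin dm) (Fin dp ⊕ Fin dm) ℝ,
      A.PosDef → A.IsSymm → A.det = 1 →
      (Astar⁻¹ * B).trace ^ 2 ≤ (A⁻¹ * B).trace ^ 2 :=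
  optimal_metric_indefinite_case_general dp dm n hdp hdm hsum B U lp lm hlp hlm hU hB Dmat hD α hα
    Astar hAstar
end
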